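/- arXiv:2012.05760 — 3 statements merged into one kernel-verified Lean document; each statement's English description precedes it below -/
import Mathlib

section
/- Consider a deep network with forward recursion H₁ = W₀X, X_k = φ(H_k), H_{k+1} = W_k X_k for k = 1,…,L, weight matrices W_k ∈ ℝ^{n_{k+1}×n_k}, differentiable activation φ applied entrywise, and square loss L(W₀,…,W_L) = ½‖Y − H_{L+1}‖_F². Let W* = (W₀*,…,W_L*) be a point in weight space and l ∈ {1,…,L} such that: (i) φ′(z) ≠ 0 for all z ∈ ℝ; (ii) rank(X_l*) = m; (iii) rank(W_{l′}*) = n_{l′+1} for all l′ ∈ {l+1,…,L}; and (iv) the gradient of L with respect to W_l vanishes at W*. Then L(W*) = 0, i.e. W* achieves the global minimum of L. -/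
/-- Layer activations of a deep fully-connected network without biases:
`X₀ = X`, `X_{k+1} = φ(H_{k+1}) = φ(W_k X_k)` (`φ` applied entrywise). -/
noncomputable def layerActivations (φ : ℝ → ℝ) (d : ℕ → ℕ) {m : ℕ}
    (X : Matrix (Fin (d 0)) (Fin m) ℝ)
    (W : (k : ℕ) → Fin (d (k + 1)) → Fin (d k) → ℝ) :
    (k : ℕ) → Matrix (Fin (d k)) (Fin m) ℝ
  | 0 => X
  | (k + 1) => (Matrix.of (W k) * layerActivations φ d X W k).map φ

/-- The network output `H_{L+1} = W_L X_L` of an `L`-hidden-layer network. -/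
noncomputable def netOutput (φ : ℝ → ℝ) (d : ℕ → ℕ) (L : ℕ) {m : ℕ}
    (X : Matrix (Fin (d 0)) (Fin m) ℝ)
    (W : (k : ℕ) → Fin (d (k + 1)) → Fin (d k) → ℝ) :
    Matrix (Fin (d (L + 1))) (Fin m) ℝ :=
  Matrix.of (W L) * layerActivations φ d X W L

/-- The square loss `L(W₀, …, W_L) = ½‖Y − H_{L+1}‖_F²`. -/
noncomputable def deepSquareLoss (φ : ℝ → ℝ) (d : ℕ → ℕ) (L : ℕ) {m : ℕ}
    (X : Matrix (Fin (d 0)) (Fin m) ℝ) (Y : Matrix (Fin (d (L + 1))) (Fin m) ℝ)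
    (W : (k : ℕ) → Fin (d (k + 1)) → Fin (d k) → ℝ) : ℝ :=
  (1 / 2) * ∑ i, ∑ j, (Y i j - netOutput φ d L X W i j) ^ 2

/-!
Differentiate the loss along the line `t ↦ W_l + t U`. Its derivative at `0` is
`-⟪Y - H_{L+1}, Ḣ_{L+1}⟫`, where forward-mode differentiation gives `Ḣ_{l+1} = U X_l` and
`Ḣ_{k+1} = W_k (φ'(H_k) ⊙ Ḣ_k)`. The map `U ↦ Ḣ_{L+1}` is onto: `X_l` has a left inverse, `φ'`
never vanishes, and each later `W_k` has a right inverse. Choosing `U` with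
`Ḣ_{L+1} = Y - H_{L+1}`, the vanishing gradient yields `‖Y - H_{L+1}‖² = 0`.
-/

namespace Matrix

variable {K : Type*} [Field K] {p q : Type*} [Fintype p] [Fintype q]

theorem exists_mul_eq_one_of_rank_eq_card_height [DecidableEq p] {A : Matrix p q K}
    (hA : A.rank = Fintype.card p) : ∃ B : Matrix q p K, A * B = 1 := by
  refine mulVec_surjective_iff_exists_right_inverse.1
    ((LinearMap.range_eq_top (f := A.mulVecLin)).1 ?_)
  apply Submodule.eq_top_of_finrank_eq
  rw [Module.finrank_fintype_fun_eq_card]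
  exact hA

theorem exists_mul_eq_one_of_rank_eq_card_width [DecidableEq q] {A : Matrix p q K}
    (hA : A.rank = Fintype.card q) : ∃ B : Matrix q p K, B * A = 1 := by
  obtain ⟨B, hB⟩ := exists_mul_eq_one_of_rank_eq_card_height (A := Aᵀ) (by rwa [rank_transpose])
  exact ⟨Bᵀ, by rw [← transpose_transpose A, ← transpose_mul, hB, transpose_one]⟩

end Matrix

open Matrix

section Tangent

variable (φ : ℝ → ℝ) (d : ℕ → ℕ) {m : ℕ} (X : Matrix (Fin (d 0)) (Fin m) ℝ)
  (W W' : (k : ℕ) → Fin (d (k + 1)) → Fin (d k) → ℝ)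

/-- Forward-mode differentiation: `Ẋ_k`, the velocity of `X_k` along a curve of weights passing
through `W` with velocity `W'`; `netOutputTangent` is the velocity of `H_{k+1} = W_k X_k`. -/
noncomputable def activationTangent : (k : ℕ) → Matrix (Fin (d k)) (Fin m) ℝ
  | 0 => 0
  | k + 1 => (netOutput φ d k X W).map (deriv φ) ⊙
      (of (W' k) * layerActivations φ d X W k + of (W k) * activationTangent k)

noncomputable def netOutputTangent (k : ℕ) : Matrix (Fin (d (k + 1))) (Fin m) ℝ :=
  of (W' k) * layerActivations φ d X W k + of (W k) * activationTangent φ d X W W' k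

theorem layerActivations_succ (k : ℕ) :
    layerActivations φ d X W (k + 1) = (netOutput φ d k X W).map φ :=
  rfl

theorem activationTangent_succ (k : ℕ) :
    activationTangent φ d X W W' (k + 1) =
      (netOutput φ d k X W).map (deriv φ) ⊙ netOutputTangent φ d X W W' k :=
  rfl

theorem activationTangent_eq_zero {l : ℕ} (hW' : ∀ k < l, W' k = 0) :
    ∀ k ≤ l, activationTangent φ d X W W' k = 0
  | 0, _ => rfl
  | k + 1, hk => by
    rw [activationTangent_succ, netOutputTangent, hW' k hk,
      activationTangent_eq_zero hW' k (by omega)]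
    simp

end Tangent

section Calculus

variable {φ : ℝ → ℝ} {d : ℕ → ℕ} {m : ℕ} (X : Matrix (Fin (d 0)) (Fin m) ℝ)
  {γ : ℝ → (k : ℕ) → Fin (d (k + 1)) → Fin (d k) → ℝ}
  {W' : (k : ℕ) → Fin (d (k + 1)) → Fin (d k) → ℝ} {t₀ : ℝ}

theorem hasDerivAt_netOutput_of_layerActivations
    (hγ : ∀ k i c, HasDerivAt (fun t => γ t k i c) (W' k i c) t₀) {k : ℕ}
    (hX : ∀ c j, HasDerivAt (fun t => layerActivations φ d X (γ t) k c j)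
      (activationTangent φ d X (γ t₀) W' k c j) t₀) (i : Fin (d (k + 1))) (j : Fin m) :
    HasDerivAt (fun t => netOutput φ d k X (γ t) i j)
      (netOutputTangent φ d X (γ t₀) W' k i j) t₀ := by
  simp only [netOutput, netOutputTangent, Matrix.add_apply, mul_apply, of_apply,
    ← Finset.sum_add_distrib]
  exact HasDerivAt.fun_sum fun c _ => (hγ k i c).mul (hX c j)

theorem hasDerivAt_layerActivations (hφ : Differentiable ℝ φ)
    (hγ : ∀ k i c, HasDerivAt (fun t => γ t k i c) (W' k i c) t₀) :
    ∀ k i j, HasDerivAt (fun t => layerActivations φ d X (γ t) k i j)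
      (activationTangent φ d X (γ t₀) W' k i j) t₀
  | 0, _, _ => hasDerivAt_const _ _
  | k + 1, i, j => by
    have hH := hasDerivAt_netOutput_of_layerActivations X hγ
      (hasDerivAt_layerActivations hφ hγ k) i j
    simp only [layerActivations_succ, activationTangent_succ, map_apply, hadamard_apply]
    exact (hφ _).hasDerivAt.comp t₀ hH

theorem hasDerivAt_netOutput (hφ : Differentiable ℝ φ)
    (hγ : ∀ k i c, HasDerivAt (fun t => γ t k i c) (W' k i c) t₀) (k : ℕ) :
    ∀ i j, HasDerivAt (fun t => netOutput φ d k X (γ t) i j)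
      (netOutputTangent φ d X (γ t₀) W' k i j) t₀ :=
  hasDerivAt_netOutput_of_layerActivations X hγ (hasDerivAt_layerActivations X hφ hγ k)

theorem hasDerivAt_deepSquareLoss (hφ : Differentiable ℝ φ) {L : ℕ}
    (Y : Matrix (Fin (d (L + 1))) (Fin m) ℝ)
    (hγ : ∀ k i c, HasDerivAt (fun t => γ t k i c) (W' k i c) t₀) :
    HasDerivAt (fun t => deepSquareLoss φ d L X Y (γ t))
      (-∑ i, ∑ j, (Y i j - netOutput φ d L X (γ t₀) i j) *
        netOutputTangent φ d X (γ t₀) W' L i j) t₀ := by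
  have h := HasDerivAt.const_mul (1 / 2 : ℝ) <| HasDerivAt.fun_sum (u := Finset.univ)
    fun i _ => HasDerivAt.fun_sum (u := Finset.univ) fun j _ =>
      ((hasDerivAt_netOutput X hφ hγ L i j).const_sub (Y i j)).pow 2
  refine h.congr_deriv ?_
  simp only [Finset.mul_sum, ← Finset.sum_neg_distrib]
  refine Finset.sum_congr rfl fun i _ => Finset.sum_congr rfl fun j _ => ?_
  push_cast
  ring

end Calculus

section Differentiable

variable {φ : ℝ → ℝ} {d : ℕ → ℕ} {m : ℕ} (X : Matrix (Fin (d 0)) (Fin m) ℝ)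
  {E : Type*} [NormedAddCommGroup E] [NormedSpace ℝ E]
  {Φ : E → (k : ℕ) → Fin (d (k + 1)) → Fin (d k) → ℝ}

theorem differentiable_netOutput (hφ : Differentiable ℝ φ)
    (hΦ : ∀ k i c, Differentiable ℝ fun v => Φ v k i c) :
    ∀ k i j, Differentiable ℝ fun v => netOutput φ d k X (Φ v) i j
  | 0, i, j => by
    simp only [netOutput, mul_apply, of_apply, layerActivations]
    fun_prop
  | k + 1, i, j => by
    have hX : ∀ c j, Differentiable ℝ fun v => layerActivations φ d X (Φ v) (k + 1) c j :=
      fun c j => hφ.comp (differentiable_netOutput hφ hΦ k c j)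
    simp only [netOutput, mul_apply, of_apply]
    fun_prop

theorem differentiable_deepSquareLoss (hφ : Differentiable ℝ φ)
    (hΦ : ∀ k i c, Differentiable ℝ fun v => Φ v k i c) {L : ℕ}
    (Y : Matrix (Fin (d (L + 1))) (Fin m) ℝ) :
    Differentiable ℝ fun v => deepSquareLoss φ d L X Y (Φ v) := by
  have := differentiable_netOutput X hφ hΦ L
  unfold deepSquareLoss
  fun_prop

end Differentiable

section Update

variable {d : ℕ → ℕ} (W : (k : ℕ) → Fin (d (k + 1)) → Fin (d k) → ℝ) (l : ℕ)

theorem differentiable_update_apply (k : ℕ) (i : Fin (d (k + 1))) (c : Fin (d k)) :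
    Differentiable ℝ fun V : Fin (d (l + 1)) → Fin (d l) → ℝ => Function.update W l V k i c := by
  rcases eq_or_ne k l with rfl | hk
  · simp only [Function.update_self]
    fun_prop
  · simp only [Function.update_of_ne hk]
    fun_prop

theorem hasDerivAt_update_add_smul_apply (U : Fin (d (l + 1)) → Fin (d l) → ℝ) (t₀ : ℝ)
    (k : ℕ) (i : Fin (d (k + 1))) (c : Fin (d k)) :
    HasDerivAt (fun t : ℝ => Function.update W l (W l + t • U) k i c)
      (Pi.single (M := fun k => Fin (d (k + 1)) → Fin (d k) → ℝ) l U k i c) t₀ := by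
  rcases eq_or_ne k l with rfl | hk
  · simpa using ((hasDerivAt_id t₀).mul_const (U i c)).const_add (W k i c)
  · simp only [Function.update_of_ne hk, Pi.single_eq_of_ne hk, Pi.zero_apply]
    exact hasDerivAt_const _ _

end Update

theorem surjective_netOutputTangent_single {φ : ℝ → ℝ} {d : ℕ → ℕ} {m : ℕ}
    (X : Matrix (Fin (d 0)) (Fin m) ℝ) (W : (k : ℕ) → Fin (d (k + 1)) → Fin (d k) → ℝ)
    (hφ' : ∀ z, deriv φ z ≠ 0) {l : ℕ} (hrank : (layerActivations φ d X W l).rank = m)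
    (k : ℕ) (hlk : l ≤ k) (hfull : ∀ k', l < k' → k' ≤ k → (of (W k')).rank = d (k' + 1)) :
    Function.Surjective fun U : Fin (d (l + 1)) → Fin (d l) → ℝ =>
      netOutputTangent φ d X W (Pi.single l U) k := by
  induction k, hlk using Nat.le_induction with
  | base =>
    intro T
    obtain ⟨P, hP⟩ := exists_mul_eq_one_of_rank_eq_card_width (A := layerActivations φ d X W l)
      (by rwa [Fintype.card_fin])
    refine ⟨of.symm (T * P), ?_⟩
    dsimp only
    rw [netOutputTangent, activationTangent_eq_zero φ d X W _
      (fun k hk => Pi.single_eq_of_ne hk.ne _) l le_rfl, Pi.single_eq_same]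
    simp [Matrix.mul_assoc, hP]
  | succ k hlk ih =>
    intro T
    obtain ⟨Q, hQ⟩ := exists_mul_eq_one_of_rank_eq_card_height (A := of (W (k + 1)))
      (by rw [Fintype.card_fin]; exact hfull (k + 1) (by omega) le_rfl)
    obtain ⟨U, hU⟩ := ih (fun k' h1 h2 => hfull k' h1 (by omega))
      (of fun i j => (Q * T) i j / deriv φ (netOutput φ d k X W i j))
    have hact : activationTangent φ d X W (Pi.single l U) (k + 1) = Q * T := by
      ext i j
      simp [activationTangent_succ, hU, mul_div_cancel₀ _ (hφ' _)]
    refine ⟨U, ?_⟩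
    dsimp only
    rw [netOutputTangent, hact, Pi.single_eq_of_ne (by omega : k + 1 ≠ l)]
    simp [← Matrix.mul_assoc, hQ]

theorem deep_critical_point_is_global_minimum_general
    (m : ℕ) (d : ℕ → ℕ) (L l : ℕ) (hlL : l ≤ L)
    (φ : ℝ → ℝ) (hφdiff : Differentiable ℝ φ) (hφ' : ∀ z : ℝ, deriv φ z ≠ 0)
    (X : Matrix (Fin (d 0)) (Fin m) ℝ) (Y : Matrix (Fin (d (L + 1))) (Fin m) ℝ)
    (W : (k : ℕ) → Fin (d (k + 1)) → Fin (d k) → ℝ)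
    (hrank : (layerActivations φ d X W l).rank = m)
    (hfull : ∀ l', l < l' → l' ≤ L → (Matrix.of (W l')).rank = d (l' + 1))
    (hgrad : fderiv ℝ
      (fun V : Fin (d (l + 1)) → Fin (d l) → ℝ =>
        deepSquareLoss φ d L X Y (Function.update W l V)) (W l) = 0) :
    deepSquareLoss φ d L X Y W = 0 := by
  obtain ⟨U, hU⟩ :=
    surjective_netOutputTangent_single X W hφ' hrank L hlL hfull (Y - netOutput φ d L X W)
  have hcurve := hasDerivAt_deepSquareLoss X hφdiff Y (hasDerivAt_update_add_smul_apply W l U 0)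
  have hflat : HasDerivAt
      (fun t : ℝ => deepSquareLoss φ d L X Y (Function.update W l (W l + t • U))) 0 0 := by
    have hf := (differentiable_deepSquareLoss X hφdiff (differentiable_update_apply W l) Y
      (W l)).hasFDerivAt
    rw [hgrad] at hf
    exact hf.comp_hasDerivAt_of_eq (0 : ℝ)
      (((hasDerivAt_id 0).smul_const U).const_add (W l)) (by simp)
  have hsum := hflat.unique hcurve
  simp only [zero_smul, add_zero, Function.update_eq_self, hU, Matrix.sub_apply] at hsum
  rw [deepSquareLoss]
  simp only [sq]
  linarith

/-- If, at a point `W*` of the weight space: the differentiable activation has nowhere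
vanishing derivative, `rank X_l* = m` for some `l ∈ {1,…,L}`, all the later weight
matrices `W_{l+1}*, …, W_L*` have full row rank, and the gradient of the square loss
with respect to `W_l` vanishes, then `W*` attains the global minimum: `L(W*) = 0`. -/
theorem deep_critical_point_is_global_minimum
    (m : ℕ) (d : ℕ → ℕ) (L l : ℕ) (hl1 : 1 ≤ l) (hlL : l ≤ L)
    (φ : ℝ → ℝ) (hφdiff : Differentiable ℝ φ) (hφ' : ∀ z : ℝ, deriv φ z ≠ 0)
    (X : Matrix (Fin (d 0)) (Fin m) ℝ) (Y : Matrix (Fin (d (L + 1))) (Fin m) ℝ)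
    (W : (k : ℕ) → Fin (d (k + 1)) → Fin (d k) → ℝ)
    (hrank : (layerActivations φ d X W l).rank = m)
    (hfull : ∀ l', l < l' → l' ≤ L → (Matrix.of (W l')).rank = d (l' + 1))
    (hgrad : fderiv ℝ
      (fun V : Fin (d (l + 1)) → Fin (d l) → ℝ =>
        deepSquareLoss φ d L X Y (Function.update W l V)) (W l) = 0) :
    deepSquareLoss φ d L X Y W = 0 :=
  deep_critical_point_is_global_minimum_general m d L l hlL φ hφdiff hφ' X Y W hrank hfull hgrad
end

section
/- Let L : ℝ^d → ℝ be twice continuously differentiable with ∇L globally Lipschitz with constant ℓ > 0, and let η ∈ (0, 1/ℓ). Then the map g : ℝ^d → ℝ^d, g(θ) = θ − η∇L(θ), is a C¹ diffeomorphism of ℝ^d: it is bijective, continuously differentiable, and its inverse is continuously differentiable. -/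
/-! The step map is `id - G` with `G = η ∇L` a contraction, of Lipschitz constant `ηℓ < 1`.
Such a map approximates the identity to within `ηℓ` everywhere, so the global inverse function
theorem for `ApproximatesLinearOn` makes it a homeomorphism. Its derivative `1 - DG(θ)` has
`‖DG(θ)‖ ≤ ηℓ < 1`, hence is invertible by a Neumann series, and a `C¹` homeomorphism whose
derivative is everywhere invertible has a `C¹` inverse. -/

open Set

section IdSubContraction

variable {𝕜 : Type*} [NontriviallyNormedField 𝕜]
  {E : Type*} [NormedAddCommGroup E] [NormedSpace 𝕜 E]

theorem LipschitzWith.approximatesLinearOn_id_sub {G : E → E} {K : NNReal}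
    (hG : LipschitzWith K G) :
    ApproximatesLinearOn (fun x => x - G x)
      ((ContinuousLinearEquiv.refl 𝕜 E : E ≃L[𝕜] E) : E →L[𝕜] E) univ K := by
  intro x _ y _
  have hdiff : x - G x - (y - G y) - (x - y) = G y - G x := by abel
  simpa [hdiff, norm_sub_rev (G y)] using hG.norm_sub_le x y

variable [CompleteSpace E]

noncomputable def LipschitzWith.idSubHomeomorph {G : E → E} {K : NNReal}
    (hG : LipschitzWith K G) (hK : K < 1) : E ≃ₜ E :=
  (hG.approximatesLinearOn_id_sub (𝕜 := 𝕜)).toHomeomorph _ <| by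
    rcases subsingleton_or_nontrivial E with hE | hE
    · exact Or.inl hE
    · exact Or.inr (by simpa using hK)

@[simp]
theorem LipschitzWith.coe_idSubHomeomorph {G : E → E} {K : NNReal}
    (hG : LipschitzWith K G) (hK : K < 1) :
    ⇑(hG.idSubHomeomorph (𝕜 := 𝕜) hK) = fun x => x - G x :=
  rfl

theorem LipschitzWith.contDiff_idSubHomeomorph {G : E → E} {K : NNReal}
    (hG : LipschitzWith K G) (hK : K < 1) {n : WithTop ℕ∞} (hGn : ContDiff 𝕜 n G) :
    ContDiff 𝕜 n ⇑(hG.idSubHomeomorph (𝕜 := 𝕜) hK) := by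
  rw [coe_idSubHomeomorph]
  exact contDiff_id.sub hGn

theorem LipschitzWith.contDiff_idSubHomeomorph_symm {G : E → E} {K : NNReal}
    (hG : LipschitzWith K G) (hK : K < 1) {n : WithTop ℕ∞} (hn : n ≠ 0)
    (hGn : ContDiff 𝕜 n G) :
    ContDiff 𝕜 n ⇑(hG.idSubHomeomorph (𝕜 := 𝕜) hK).symm := by
  have hDG (x : E) : ‖fderiv 𝕜 G x‖ < 1 :=
    (norm_fderiv_le_of_lipschitz 𝕜 hG).trans_lt (by exact_mod_cast hK)
  refine (hG.idSubHomeomorph hK).contDiff_symm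
    (f₀' := fun x => ContinuousLinearEquiv.ofUnit (Units.oneSub _ (hDG x))) (fun x => ?_) ?_
  · exact (hasFDerivAt_id x).sub ((hGn.differentiable hn) x).hasFDerivAt
  · exact hG.contDiff_idSubHomeomorph hK hGn

end IdSubContraction

theorem contDiff_gradient {F : Type*} [NormedAddCommGroup F] [InnerProductSpace ℝ F]
    [CompleteSpace F] {f : F → ℝ} {n : WithTop ℕ∞} (hf : ContDiff ℝ (n + 1) f) :
    ContDiff ℝ n (gradient f) :=
  (InnerProductSpace.toDual ℝ F).symm.contDiff.comp (hf.fderiv_right le_rfl)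

/-- Proposition: for a `C²` function `L` with `ℓ`-Lipschitz gradient and step size
`η ∈ (0, 1/ℓ)`, the gradient-descent map `g(θ) = θ − η∇L(θ)` is a `C¹` diffeomorphism
of `ℝ^d`: it is bijective, continuously differentiable, and has a continuously
differentiable inverse. -/
theorem gd_map_is_diffeomorphism
    (d : ℕ) (L : EuclideanSpace ℝ (Fin d) → ℝ) (hL : ContDiff ℝ 2 L)
    (ℓip : ℝ) (hℓip : 0 < ℓip)
    (hlip : ∀ θ₁ θ₂ : EuclideanSpace ℝ (Fin d),
      ‖gradient L θ₁ - gradient L θ₂‖ ≤ ℓip * ‖θ₁ - θ₂‖)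
    (η : ℝ) (hη : 0 < η) (hη' : η < 1 / ℓip)
    (g : EuclideanSpace ℝ (Fin d) → EuclideanSpace ℝ (Fin d))
    (hg : ∀ θ, g θ = θ - η • gradient L θ) :
    Function.Bijective g ∧
    ∃ e : EuclideanSpace ℝ (Fin d) ≃ EuclideanSpace ℝ (Fin d),
      (∀ θ, e θ = g θ) ∧ ContDiff ℝ 1 (e : EuclideanSpace ℝ (Fin d) → EuclideanSpace ℝ (Fin d)) ∧
      ContDiff ℝ 1 (e.symm : EuclideanSpace ℝ (Fin d) → EuclideanSpace ℝ (Fin d)) := by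
  lift ℓip to NNReal using hℓip.le with ℓ
  have hgrad : LipschitzWith ℓ (gradient L) :=
    LipschitzWith.of_dist_le_mul fun x y => by simpa only [dist_eq_norm] using hlip x y
  have hstep : LipschitzWith (‖η‖₊ * ℓ) (η • gradient L) :=
    (lipschitzWith_smul η).comp hgrad
  have hcontract : ‖η‖₊ * ℓ < 1 := by
    rw [← NNReal.coe_lt_coe, NNReal.coe_mul, coe_nnnorm, Real.norm_of_nonneg hη.le,
      NNReal.coe_one]
    rwa [lt_div_iff₀ hℓip] at hη'
  have hgradC1 : ContDiff ℝ 1 (η • gradient L) :=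
    (contDiff_gradient (n := 1) hL).const_smul η
  set e := hstep.idSubHomeomorph (𝕜 := ℝ) hcontract
  have he : ⇑e = g := by
    rw [hstep.coe_idSubHomeomorph]
    exact funext fun θ => (hg θ).symm
  exact ⟨he ▸ e.bijective, e.toEquiv, congrFun he,
    hstep.contDiff_idSubHomeomorph hcontract hgradC1,
    hstep.contDiff_idSubHomeomorph_symm hcontract one_ne_zero hgradC1⟩
end

section
/- Let F be a measurable space of hypotheses, D a probability distribution on Z, r : F × Z → [0,1] a measurable risk, R(f) = E_{z∼D} r(f,z), R̂_m(f) = (1/m)Σᵢ r(f,zᵢ) for S_m = (z₁,…,z_m), and Δ_m(f) = |R(f) − R̂_m(f)|. Then for any probability distribution P on F and any δ ∈ (0,1), with probability at least 1−δ over S_m ∼ D^m: E_{f∼P} exp( (2m−1) Δ_m(f)² ) ≤ 4m/δ. In particular, for every fixed f ∈ F, E_{S_m∼D^m} exp( (2m−1) Δ_m(f)² ) ≤ 4m. -/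
open MeasureTheory ProbabilityTheory Real
open scoped ENNReal NNReal

/-!
By Hoeffding's lemma the centred empirical risk `R̂_m(f) - R(f)` is sub-Gaussian with variance
proxy `c = 1/(4m)`. Averaging `exp (x y)` against a Gaussian weight in `x` linearises
`exp (t y²)`; exchanging the two integrals, the mgf bound gives `E exp (t Y²) ≤ (1 - 2tc)^(-1/2)`
for any `c`-sub-Gaussian `Y`, which for `t = 2m - 1` is `√(2m) ≤ 4m`. The high-probability
bound follows by Tonelli (swap `E_S` and `E_{f∼P}`) and Markov's inequality.
-/

lemma lintegral_exp_neg_mul_sq_add_mul {b : ℝ} (hb : 0 < b) (y : ℝ) :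
    ∫⁻ x, ENNReal.ofReal (exp (-b * x ^ 2 + y * x)) =
      ENNReal.ofReal (exp (y ^ 2 / (4 * b)) * √(π / b)) := by
  have hsq : ∀ x, -b * x ^ 2 + y * x = y ^ 2 / (4 * b) + -b * (x - y / (2 * b)) ^ 2 := by
    intro x; field_simp; ring
  simp_rw [hsq, exp_add, ENNReal.ofReal_mul (exp_pos _).le]
  rw [lintegral_const_mul' _ _ ENNReal.ofReal_ne_top,
    lintegral_sub_right_eq_self (fun x => ENNReal.ofReal (exp (-b * x ^ 2))),
    ← ofReal_integral_eq_lintegral_ofReal (integrable_exp_neg_mul_sq hb)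
      (ae_of_all _ fun x => (exp_pos _).le), integral_gaussian]

lemma integral_exp_le_of_lintegral_le {α : Type*} [MeasurableSpace α] {μ : Measure α}
    {g : α → ℝ} (hg : AEMeasurable g μ) {C : ℝ} (hC : 0 ≤ C)
    (h : ∫⁻ x, ENNReal.ofReal (exp (g x)) ∂μ ≤ ENNReal.ofReal C) :
    ∫ x, exp (g x) ∂μ ≤ C := by
  rw [integral_eq_lintegral_of_nonneg_ae (ae_of_all _ fun _ => (exp_pos _).le)
    (measurable_exp.comp_aemeasurable hg).aestronglyMeasurable]
  exact ENNReal.toReal_le_of_le_ofReal hC h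

theorem one_sub_le_measure_le_div_of_lintegral_le {Ω : Type*} [MeasurableSpace Ω] {μ : Measure Ω}
    [IsProbabilityMeasure μ] {H : Ω → ℝ≥0∞} (hH : AEMeasurable H μ) {C δ : ℝ} (hC : 0 < C)
    (hδ : 0 < δ) (hint : ∫⁻ ω, H ω ∂μ ≤ ENNReal.ofReal C) :
    1 - ENNReal.ofReal δ ≤ μ {ω | H ω ≤ ENNReal.ofReal (C / δ)} := by
  have hmarkov : μ {ω | ENNReal.ofReal (C / δ) ≤ H ω} ≤ ENNReal.ofReal δ := by
    refine (meas_ge_le_lintegral_div hH (by positivity) ENNReal.ofReal_ne_top).trans ?_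
    refine ENNReal.div_le_of_le_mul (hint.trans_eq ?_)
    rw [← ENNReal.ofReal_mul hδ.le, mul_div_cancel₀ _ hδ.ne']
  calc 1 - ENNReal.ofReal δ ≤ 1 - μ {ω | ENNReal.ofReal (C / δ) ≤ H ω} :=
        tsub_le_tsub_left hmarkov 1
    _ ≤ μ {ω | H ω ≤ ENNReal.ofReal (C / δ)} := by
        rw [tsub_le_iff_right, ← measure_univ (μ := μ)]
        refine (measure_mono fun ω _ => ?_).trans (measure_union_le _ _)
        exact le_total (H ω) _

theorem one_sub_le_measure_integral_exp_le_div {Ω α : Type*} [MeasurableSpace Ω]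
    [MeasurableSpace α] {μ : Measure Ω} [IsProbabilityMeasure μ] {P : Measure α}
    [IsProbabilityMeasure P] {G : Ω → α → ℝ} (hG : Measurable (Function.uncurry G))
    {C δ : ℝ} (hC : 0 < C) (hδ : 0 < δ)
    (hmoment : ∀ a, ∫⁻ ω, ENNReal.ofReal (exp (G ω a)) ∂μ ≤ ENNReal.ofReal C) :
    1 - ENNReal.ofReal δ ≤ μ {ω | ∫ a, exp (G ω a) ∂P ≤ C / δ} := by
  have hexp : Measurable fun p : Ω × α => ENNReal.ofReal (exp (G p.1 p.2)) :=
    ENNReal.measurable_ofReal.comp (measurable_exp.comp hG)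
  have hint : ∫⁻ ω, ∫⁻ a, ENNReal.ofReal (exp (G ω a)) ∂P ∂μ ≤ ENNReal.ofReal C := by
    rw [lintegral_lintegral_swap hexp.aemeasurable]
    calc _ ≤ ∫⁻ _ : α, ENNReal.ofReal C ∂P := lintegral_mono hmoment
      _ = _ := by simp
  refine (one_sub_le_measure_le_div_of_lintegral_le hexp.lintegral_prod_right'.aemeasurable hC hδ
    hint).trans (measure_mono fun ω hω => ?_)
  exact integral_exp_le_of_lintegral_le hG.of_uncurry_left.aemeasurable
    (div_nonneg hC.le hδ.le) hω

namespace ProbabilityTheory.HasSubgaussianMGF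

variable {Ω : Type*} [MeasurableSpace Ω] {μ : Measure Ω} {X : Ω → ℝ} {c : ℝ≥0}

lemma isFiniteMeasure (h : HasSubgaussianMGF X c μ) : IsFiniteMeasure μ := by
  have h1 : Integrable (fun _ => (1 : ℝ)) μ := by simpa using h.integrable_exp_mul 0
  exact (integrable_const_iff.1 h1).resolve_left one_ne_zero

lemma lintegral_exp_mul_le (h : HasSubgaussianMGF X c μ) (t : ℝ) :
    ∫⁻ ω, ENNReal.ofReal (exp (t * X ω)) ∂μ ≤ ENNReal.ofReal (exp (c * t ^ 2 / 2)) := by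
  rw [← ofReal_integral_eq_lintegral_ofReal (h.integrable_exp_mul t)
    (ae_of_all _ fun ω => (exp_pos _).le)]
  exact ENNReal.ofReal_le_ofReal (h.mgf_le t)

theorem lintegral_exp_mul_sq_le (h : HasSubgaussianMGF X c μ) {t : ℝ} (ht : 0 < t)
    (htc : 2 * t * c < 1) :
    ∫⁻ ω, ENNReal.ofReal (exp (t * X ω ^ 2)) ∂μ ≤ ENNReal.ofReal (√(1 - 2 * t * c))⁻¹ := by
  have := h.isFiniteMeasure
  set b : ℝ := 1 / (4 * t) with hb_def
  have hb : 0 < b := by positivity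
  have hb' : 0 < b - c / 2 := by
    rw [hb_def]; field_simp; nlinarith
  set K : ℝ≥0∞ := ENNReal.ofReal (√(π / b))⁻¹
  have hlin : ∀ y : ℝ, ENNReal.ofReal (exp (t * y ^ 2)) =
      K * ∫⁻ x, ENNReal.ofReal (exp (-b * x ^ 2)) * ENNReal.ofReal (exp (x * y)) := by
    intro y
    simp_rw [← ENNReal.ofReal_mul (exp_pos _).le, ← exp_add, mul_comm _ y]
    rw [lintegral_exp_neg_mul_sq_add_mul hb, ← ENNReal.ofReal_mul (by positivity)]
    congr 1
    rw [hb_def]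
    field_simp
  have hmeas : AEMeasurable (Function.uncurry fun ω x =>
      ENNReal.ofReal (exp (-b * x ^ 2)) * ENNReal.ofReal (exp (x * X ω))) (μ.prod volume) := by
    have hX : AEMeasurable (fun p : Ω × ℝ => p.2 * X p.1) (μ.prod volume) :=
      measurable_snd.aemeasurable.mul h.aemeasurable.comp_fst
    exact (ENNReal.measurable_ofReal.comp (measurable_exp.comp
      ((measurable_snd.pow_const 2).const_mul _))).aemeasurable.mul
      (ENNReal.measurable_ofReal.comp_aemeasurable (measurable_exp.comp_aemeasurable hX))
  calc ∫⁻ ω, ENNReal.ofReal (exp (t * X ω ^ 2)) ∂μ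
      = K * ∫⁻ x, ENNReal.ofReal (exp (-b * x ^ 2)) *
          ∫⁻ ω, ENNReal.ofReal (exp (x * X ω)) ∂μ := by
        simp_rw [hlin]
        rw [lintegral_const_mul' _ _ ENNReal.ofReal_ne_top, lintegral_lintegral_swap hmeas]
        simp_rw [lintegral_const_mul' _ _ ENNReal.ofReal_ne_top]
        rfl
    _ ≤ K * ∫⁻ x, ENNReal.ofReal (exp (-b * x ^ 2)) * ENNReal.ofReal (exp (c * x ^ 2 / 2)) := by
        gcongr with x
        exact h.lintegral_exp_mul_le x
    _ = K * ∫⁻ x, ENNReal.ofReal (exp (-(b - c / 2) * x ^ 2 + 0 * x)) := by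
        simp_rw [← ENNReal.ofReal_mul (exp_pos _).le, ← exp_add]
        congr 1
        refine lintegral_congr fun x => ?_
        ring_nf
    _ = ENNReal.ofReal (√(1 - 2 * t * c))⁻¹ := by
        rw [lintegral_exp_neg_mul_sq_add_mul hb', ← ENNReal.ofReal_mul (by positivity)]
        congr 1
        rw [zero_pow two_ne_zero, zero_div, exp_zero, one_mul, ← sqrt_inv,
          ← sqrt_mul (by positivity), ← sqrt_inv]
        congr 1
        rw [hb_def]
        field_simp
        rw [div_eq_div_iff (by linarith) (by linarith)]
        ring

end ProbabilityTheory.HasSubgaussianMGF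

section SampleMean

variable {Z : Type*} [MeasurableSpace Z] {D : Measure Z} [IsProbabilityMeasure D] {m : ℕ}

theorem hasSubgaussianMGF_sampleMean_sub (hm : 0 < m) {g : Z → ℝ} (hg : AEMeasurable g D)
    {a b : ℝ} (hab : ∀ᵐ z ∂D, g z ∈ Set.Icc a b) :
    HasSubgaussianMGF (fun s : Fin m → Z => 1 / (m : ℝ) * ∑ i, g (s i) - ∫ z, g z ∂D)
      ((‖b - a‖₊ / 2) ^ 2 / m) (Measure.pi fun _ => D) := by
  set Y : Z → ℝ := fun z => g z - ∫ z, g z ∂D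
  have hY : HasSubgaussianMGF Y ((‖b - a‖₊ / 2) ^ 2) D := hasSubgaussianMGF_of_mem_Icc hg hab
  have hcoord : ∀ i : Fin m, HasSubgaussianMGF (fun s : Fin m → Z => Y (s i))
      ((‖b - a‖₊ / 2) ^ 2) (Measure.pi fun _ => D) := fun i =>
    HasSubgaussianMGF.of_map (measurable_pi_apply i).aemeasurable
      (by rwa [(measurePreserving_eval (fun _ => D) i).map_eq])
  have hsum : HasSubgaussianMGF (fun s : Fin m → Z => 1 / (m : ℝ) * ∑ i, Y (s i))
      (⟨(1 / (m : ℝ)) ^ 2, sq_nonneg _⟩ * ∑ _i : Fin m, (‖b - a‖₊ / 2) ^ 2)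
      (Measure.pi fun _ => D) :=
    (HasSubgaussianMGF.sum_of_iIndepFun (iIndepFun_pi fun _ => hY.aemeasurable)
      fun i _ => hcoord i).const_mul _
  have hm' : (m : ℝ) ≠ 0 := by positivity
  convert hsum using 1
  · ext s
    simp only [Y, Finset.sum_sub_distrib, Finset.sum_const, Finset.card_univ, Fintype.card_fin,
      nsmul_eq_mul]
    field_simp
  · rw [Finset.sum_const, Finset.card_univ, Fintype.card_fin, nsmul_eq_mul]
    apply NNReal.eq
    -- `const_mul` writes its factor as a bare subtype element, opaque to `push_cast`
    change _ = (1 / (m : ℝ)) ^ 2 * ((m * (‖b - a‖₊ / 2) ^ 2 : ℝ≥0) : ℝ)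
    push_cast
    field_simp

theorem lintegral_exp_mul_sq_sampleMean_sub_le (hm : 0 < m) {g : Z → ℝ}
    (hg : AEMeasurable g D) (hg01 : ∀ᵐ z ∂D, g z ∈ Set.Icc 0 1) :
    ∫⁻ s : Fin m → Z, ENNReal.ofReal (exp ((2 * m - 1) *
        (1 / (m : ℝ) * ∑ i, g (s i) - ∫ z, g z ∂D) ^ 2)) ∂(Measure.pi fun _ => D) ≤
      ENNReal.ofReal √(2 * m) := by
  have hm1 : (1 : ℝ) ≤ m := Nat.one_le_cast.2 hm
  have hc : (((‖(1 : ℝ) - 0‖₊ / 2) ^ 2 / m : ℝ≥0) : ℝ) = 1 / (4 * m) := by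
    push_cast; field_simp; norm_num
  refine ((hasSubgaussianMGF_sampleMean_sub hm hg hg01).lintegral_exp_mul_sq_le
    (by linarith) ?_).trans_eq ?_
  · rw [hc]; field_simp; linarith
  · congr 1
    rw [hc, ← sqrt_inv]
    congr 1
    field_simp
    ring

end SampleMean

/-- Lemma (McAllester): for a `[0,1]`-valued risk, true risk `R`, empirical risk
`R̂_m` over `S_m ∼ D^m`, and `Δ_m(f) = |R(f) − R̂_m(f)|`: for any prior probability
distribution `P` on the hypothesis space and any `δ ∈ (0,1)`, with probability at
least `1−δ` over `S_m`, `E_{f∼P} exp((2m−1)Δ_m(f)²) ≤ 4m/δ`; in particular, for every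
fixed hypothesis `f`, `E_{S_m∼D^m} exp((2m−1)Δ_m(f)²) ≤ 4m`. -/
theorem mcallester_exponential_moment
    {F Z : Type*} [MeasurableSpace F] [MeasurableSpace Z]
    (D : Measure Z) [IsProbabilityMeasure D]
    (m : ℕ) (hm : 0 < m)
    (r : F → Z → ℝ) (hrmeas : Measurable (Function.uncurry r))
    (hr01 : ∀ f z, r f z ∈ Set.Icc (0 : ℝ) 1)
    (R : F → ℝ) (hR : ∀ f, R f = ∫ z, r f z ∂D)
    (Rhat : (Fin m → Z) → F → ℝ)
    (hRhat : ∀ s f, Rhat s f = (1 / (m : ℝ)) * ∑ i, r f (s i))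
    (Δ : (Fin m → Z) → F → ℝ)
    (hΔ : ∀ s f, Δ s f = |R f - Rhat s f|) :
    (∀ (P : Measure F), IsProbabilityMeasure P → ∀ δ ∈ Set.Ioo (0 : ℝ) 1,
      1 - ENNReal.ofReal δ ≤
        (Measure.pi fun _ : Fin m => D) {s : Fin m → Z |
          ∫ f, Real.exp ((2 * m - 1) * (Δ s f) ^ 2) ∂P ≤ 4 * m / δ}) ∧
    (∀ f : F, ∫ s, Real.exp ((2 * m - 1) * (Δ s f) ^ 2)
        ∂(Measure.pi fun _ : Fin m => D) ≤ 4 * m) := by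
  have hΔ_sq : ∀ s f, Δ s f ^ 2 = (1 / (m : ℝ) * ∑ i, r f (s i) - ∫ z, r f z ∂D) ^ 2 := by
    intro s f
    rw [hΔ, hR, hRhat, sq_abs, ← neg_sub, neg_sq]
  have hΔ_meas : Measurable (Function.uncurry fun s f => (2 * m - 1) * Δ s f ^ 2) := by
    simp_rw [Function.uncurry_def, hΔ_sq]
    have hR_meas : Measurable fun f => ∫ z, r f z ∂D :=
      hrmeas.stronglyMeasurable.integral_prod_right'.measurable
    have hr_meas : ∀ i, Measurable fun p : (Fin m → Z) × F => r p.2 (p.1 i) := fun i =>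
      hrmeas.comp (measurable_snd.prodMk ((measurable_pi_apply i).comp measurable_fst))
    exact ((((Finset.measurable_sum _ fun i _ => hr_meas i).const_mul _).sub
      (hR_meas.comp measurable_snd)).pow_const 2).const_mul _
  have hmoment : ∀ f, ∫⁻ s, ENNReal.ofReal (exp ((2 * m - 1) * Δ s f ^ 2))
      ∂(Measure.pi fun _ => D) ≤ ENNReal.ofReal (4 * m) := by
    intro f
    simp_rw [hΔ_sq]
    refine (lintegral_exp_mul_sq_sampleMean_sub_le hm
      (hrmeas.comp measurable_prodMk_left).aemeasurable (ae_of_all _ (hr01 f))).trans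
      (ENNReal.ofReal_le_ofReal ?_)
    have hm1 : (1 : ℝ) ≤ m := Nat.one_le_cast.2 hm
    rw [sqrt_le_iff]
    constructor <;> nlinarith
  exact ⟨fun P _ δ hδ => one_sub_le_measure_integral_exp_le_div hΔ_meas (by positivity) hδ.1
      hmoment,
    fun f => integral_exp_le_of_lintegral_le hΔ_meas.of_uncurry_right.aemeasurable
      (by positivity) (hmoment f)⟩
end
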